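/- arXiv:1403.5658 — 3 statements merged into one kernel-verified Lean document; each statement's English description precedes it below -/
import Mathlib

section
/- For fixed α, β, ξ, κ > 0 with β < ξ and (ξ-β)(2αβ-1) > 0, the determinant of the Jacobian of G at p₃ = (1/(1+αβ), (1-2αβ)/((1+αβ)(β-ξ))) equals ((1-2αβ)²κ)/((1+αβ)(β-ξ)) and is negative, so p₃ is a saddle. -/
/-!
At p₃ both factors of G that depend on the point vanish: y₃ (1 + αβ) = 1, and the factor
-1 + ε(β - ξ) + 3αβy shared by both components is zero. Hence the Jacobian there has a simple
form in which the two products 6αβ y₃ ε₃ (β - ξ) cancel, leaving det J = κ ε₃² (1 + αβ)(β - ξ).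
Since 2αβ > 1 we have 1 + αβ > 0, and β < ξ makes the determinant negative.
-/

namespace SaddleField

variable (α β ξ κ : ℝ)

def sharedFactor (y e : ℝ) : ℝ := -1 + e * (β - ξ) + 3 * α * β * y

def G₁ (y e : ℝ) : ℝ := κ * e * (1 - y * (1 + α * β)) - 2 * y * sharedFactor α β ξ y e

def G₂ (y e : ℝ) : ℝ := -e * sharedFactor α β ξ y e

noncomputable def jacobian (y e : ℝ) : Matrix (Fin 2) (Fin 2) ℝ :=
  !![deriv (fun y => G₁ α β ξ κ y e) y, deriv (fun e => G₁ α β ξ κ y e) e;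
     deriv (fun y => G₂ α β ξ y e) y, deriv (fun e => G₂ α β ξ y e) e]

variable {α β ξ κ}

theorem hasDerivAt_sharedFactor_fst (y e : ℝ) :
    HasDerivAt (fun y => sharedFactor α β ξ y e) (3 * α * β) y :=
  ((hasDerivAt_id' y).const_mul (3 * α * β)).const_add (-1 + e * (β - ξ)) |>.congr_deriv (by ring)

theorem hasDerivAt_sharedFactor_snd (y e : ℝ) :
    HasDerivAt (fun e => sharedFactor α β ξ y e) (β - ξ) e :=
  (((hasDerivAt_id' e).mul_const (β - ξ)).const_add (-1)).add_const (3 * α * β * y)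
    |>.congr_deriv (by ring)

theorem deriv_G₁_fst (y e : ℝ) :
    deriv (fun y => G₁ α β ξ κ y e) y
      = -κ * e * (1 + α * β) - 2 * sharedFactor α β ξ y e - 6 * α * β * y :=
  (((((hasDerivAt_id' y).mul_const (1 + α * β)).const_sub 1).const_mul (κ * e)).sub
    (((hasDerivAt_id' y).const_mul 2).mul (hasDerivAt_sharedFactor_fst y e)))
    |>.congr_deriv (by ring) |>.deriv

theorem deriv_G₁_snd (y e : ℝ) :
    deriv (fun e => G₁ α β ξ κ y e) e = κ * (1 - y * (1 + α * β)) - 2 * y * (β - ξ) :=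
  ((((hasDerivAt_id' e).const_mul κ).mul_const (1 - y * (1 + α * β))).sub
    ((hasDerivAt_sharedFactor_snd y e).const_mul (2 * y))).congr_deriv (by ring) |>.deriv

theorem deriv_G₂_fst (y e : ℝ) :
    deriv (fun y => G₂ α β ξ y e) y = -e * (3 * α * β) :=
  ((hasDerivAt_sharedFactor_fst y e).const_mul (-e)).deriv

theorem deriv_G₂_snd (y e : ℝ) :
    deriv (fun e => G₂ α β ξ y e) e = -sharedFactor α β ξ y e - e * (β - ξ) :=
  ((hasDerivAt_neg' e).mul (hasDerivAt_sharedFactor_snd y e)).congr_deriv (by ring) |>.deriv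

theorem sharedFactor_eq_zero_at_p₃ (hA : 1 + α * β ≠ 0) (hβξ : β - ξ ≠ 0) :
    sharedFactor α β ξ (1 / (1 + α * β)) ((1 - 2 * α * β) / ((1 + α * β) * (β - ξ))) = 0 := by
  rw [sharedFactor]
  field_simp
  ring

theorem det_jacobian_of_sharedFactor_eq_zero {y e : ℝ} (hr : sharedFactor α β ξ y e = 0)
    (hy : y * (1 + α * β) = 1) :
    (jacobian α β ξ κ y e).det = κ * e ^ 2 * ((1 + α * β) * (β - ξ)) := by
  rw [jacobian, Matrix.det_fin_two_of, deriv_G₁_fst, deriv_G₁_snd, deriv_G₂_fst, deriv_G₂_snd,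
    hr, hy]
  ring

end SaddleField

theorem stmt3_general (α β ξ κ : ℝ) (hκ : 0 < κ)
    (hβξ : β < ξ) (hsign : (ξ - β) * (2 * α * β - 1) > 0)
    (G₁ G₂ : ℝ → ℝ → ℝ)
    (hG₁ : ∀ y e : ℝ, G₁ y e = κ * e * (1 - y * (1 + α * β))
      - 2 * y * (-1 + e * (β - ξ) + 3 * α * β * y))
    (hG₂ : ∀ y e : ℝ, G₂ y e = -e * (-1 + e * (β - ξ) + 3 * α * β * y)) :
    let y₃ : ℝ := 1 / (1 + α * β)
    let e₃ : ℝ := (1 - 2 * α * β) / ((1 + α * β) * (β - ξ))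
    let J : Matrix (Fin 2) (Fin 2) ℝ :=
      !![deriv (fun y => G₁ y e₃) y₃, deriv (fun e => G₁ y₃ e) e₃;
         deriv (fun y => G₂ y e₃) y₃, deriv (fun e => G₂ y₃ e) e₃]
    J.det = ((1 - 2 * α * β) ^ 2 * κ) / ((1 + α * β) * (β - ξ)) ∧ J.det < 0 := by
  intro y₃ e₃ J
  obtain rfl : G₁ = SaddleField.G₁ α β ξ κ := funext₂ hG₁
  obtain rfl : G₂ = SaddleField.G₂ α β ξ := funext₂ hG₂
  have hβξ' : β - ξ < 0 := sub_neg.mpr hβξ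
  have hαβ : 0 < 2 * α * β - 1 := (pos_iff_pos_of_mul_pos hsign).mp (by linarith)
  have hA : 0 < 1 + α * β := by linarith
  have hdet : J.det = ((1 - 2 * α * β) ^ 2 * κ) / ((1 + α * β) * (β - ξ)) :=
    (SaddleField.det_jacobian_of_sharedFactor_eq_zero
      (SaddleField.sharedFactor_eq_zero_at_p₃ hA.ne' hβξ'.ne) (one_div_mul_cancel hA.ne')).trans
      (by rw [div_pow]; field_simp)
  refine ⟨hdet, hdet ▸ div_neg_of_pos_of_neg ?_ (mul_neg_of_pos_of_neg hA hβξ')⟩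
  exact mul_pos (pow_two_pos_of_ne_zero (by linarith)) hκ

/-- The determinant of the Jacobian of G at p₃ equals ((1-2αβ)²κ)/((1+αβ)(β-ξ)) and is
negative, so p₃ is a saddle. -/
theorem stmt3 (α β ξ κ : ℝ) (hα : 0 < α) (hβ : 0 < β) (hξ : 0 < ξ) (hκ : 0 < κ)
    (hβξ : β < ξ) (hsign : (ξ - β) * (2 * α * β - 1) > 0)
    (G₁ G₂ : ℝ → ℝ → ℝ)
    (hG₁ : ∀ y e : ℝ, G₁ y e = κ * e * (1 - y * (1 + α * β))
      - 2 * y * (-1 + e * (β - ξ) + 3 * α * β * y))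
    (hG₂ : ∀ y e : ℝ, G₂ y e = -e * (-1 + e * (β - ξ) + 3 * α * β * y)) :
    let y₃ : ℝ := 1 / (1 + α * β)
    let e₃ : ℝ := (1 - 2 * α * β) / ((1 + α * β) * (β - ξ))
    let J : Matrix (Fin 2) (Fin 2) ℝ :=
      !![deriv (fun y => G₁ y e₃) y₃, deriv (fun e => G₁ y₃ e) e₃;
         deriv (fun y => G₂ y e₃) y₃, deriv (fun e => G₂ y₃ e) e₃]
    J.det = ((1 - 2 * α * β) ^ 2 * κ) / ((1 + α * β) * (β - ξ)) ∧ J.det < 0 :=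
  stmt3_general α β ξ κ hκ hβξ hsign G₁ G₂ hG₁ hG₂
end

section
/- For fixed α, β, ξ, κ > 0 with β > ξ and (ξ-β)(2αβ-1) > 0, the trace of the Jacobian of G at p₃ = (1/(1+αβ), (1-2αβ)/((1+αβ)(β-ξ))) equals -4 + 3/(1+αβ) + (2αβ-1)κ/(β-ξ) and is negative. -/
lemma quad_deriv (a b c x : ℝ) : deriv (fun y : ℝ => a + b * y + c * y ^ 2) x = b + 2 * c * x := by
  have h : HasDerivAt (fun y : ℝ => a + b * y + c * y ^ 2) (0 + b * 1 + c * (↑2 * x ^ 1)) x :=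
    ((hasDerivAt_const x a).add ((hasDerivAt_id x).const_mul b)).add
      ((hasDerivAt_pow 2 x).const_mul c)
  rw [h.deriv]; push_cast; ring

/-- The trace of the Jacobian of G at p₃ equals -4 + 3/(1+αβ) + (2αβ-1)κ/(β-ξ)
and is negative. -/
theorem stmt4 (α β ξ κ : ℝ) (hα : 0 < α) (hβ : 0 < β) (hξ : 0 < ξ) (hκ : 0 < κ)
    (hβξ : β > ξ) (hsign : (ξ - β) * (2 * α * β - 1) > 0)
    (G₁ G₂ : ℝ → ℝ → ℝ)
    (hG₁ : ∀ y e : ℝ, G₁ y e = κ * e * (1 - y * (1 + α * β))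
      - 2 * y * (-1 + e * (β - ξ) + 3 * α * β * y))
    (hG₂ : ∀ y e : ℝ, G₂ y e = -e * (-1 + e * (β - ξ) + 3 * α * β * y)) :
    let y₃ : ℝ := 1 / (1 + α * β)
    let e₃ : ℝ := (1 - 2 * α * β) / ((1 + α * β) * (β - ξ))
    let J : Matrix (Fin 2) (Fin 2) ℝ :=
      !![deriv (fun y => G₁ y e₃) y₃, deriv (fun e => G₁ y₃ e) e₃;
         deriv (fun y => G₂ y e₃) y₃, deriv (fun e => G₂ y₃ e) e₃]
    J.trace = -4 + 3 / (1 + α * β) + (2 * α * β - 1) * κ / (β - ξ) ∧ J.trace < 0 := by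
  intro y₃ e₃ J
  have h1 : (0:ℝ) < 1 + α * β := by nlinarith
  have h1' : (1:ℝ) + α * β ≠ 0 := ne_of_gt h1
  have h2 : (0:ℝ) < β - ξ := by linarith
  have h2' : β - ξ ≠ 0 := ne_of_gt h2
  have hfa : (fun y => G₁ y e₃) =
      fun y => (κ * e₃) + (-(κ * e₃ * (1 + α * β)) + 2 - 2 * e₃ * (β - ξ)) * y
        + (-(6 * α * β)) * y ^ 2 := by
    funext y; rw [hG₁]; ring
  have hfd : (fun e => G₂ y₃ e) =
      fun e => (0:ℝ) + (1 - 3 * α * β * y₃) * e + (-(β - ξ)) * e ^ 2 := by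
    funext e; rw [hG₂]; ring
  have htr : J.trace = deriv (fun y => G₁ y e₃) y₃ + deriv (fun e => G₂ y₃ e) e₃ := by
    simp [J, Matrix.trace_fin_two_of]
  have heq : J.trace = -4 + 3 / (1 + α * β) + (2 * α * β - 1) * κ / (β - ξ) := by
    rw [htr, hfa, hfd, quad_deriv, quad_deriv]
    show _ = _
    simp only [y₃, e₃]
    field_simp
    ring
  refine ⟨heq, ?_⟩
  rw [heq]
  have hab : 2 * α * β - 1 < 0 := by nlinarith
  have hneg : (2 * α * β - 1) * κ / (β - ξ) < 0 :=
    div_neg_of_neg_of_pos (by nlinarith) h2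
  have h3 : 3 / (1 + α * β) ≤ 3 := by
    rw [div_le_iff₀ h1]; nlinarith
  linarith
end

section
/- Let W_c be as above with w_c(β₀) = α(β₀-ξ)coth(α(ξ-β₀)/ε_b). Then the derivative of W_c at β₀ = ξ (in the sense of the continuous extension) equals W_c'(ξ) = (2/ξ)(ε_b - ε_b μ + αξ)(α - 2(μ-1)ξ)/(μ-1). -/
noncomputable def coth (x : ℝ) : ℝ := Real.cosh x / Real.sinh x

/-!
Near `β₀ = ξ` the term `w_c` is `-ε_b` times `x coth x` at `x = α(ξ - β₀)/ε_b`, which extends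
continuously to `x = 0` with value `1`. With this extension `W_c(β₀)` becomes
`(β₀ - ξ) h(β₀) + α ε_b log(u(β₀) v(β₀))`, where `h` is continuous, `u = (2ξ - β₀)/β₀` is smooth
with `u(ξ) = 1`, and `v = 1 + (β₀ - ξ) k(β₀)` with `k` continuous. A function `(y - x) h(y)` has
derivative `h(x)` at `x` as soon as `h` is continuous there, so the chain rule applies and the
derivative at `ξ` is `h(ξ) + α ε_b (u'(ξ) + k(ξ))`.
-/

open Filter Topology Real

theorem hasDerivAt_sub_smul_of_continuousAt {𝕜 E : Type*} [NontriviallyNormedField 𝕜]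
    [NormedAddCommGroup E] [NormedSpace 𝕜 E] {h : 𝕜 → E} {x : 𝕜} (hh : ContinuousAt h x) :
    HasDerivAt (fun y => (y - x) • h y) (h x) x := by
  rw [hasDerivAt_iff_tendsto_slope]
  refine (hh.tendsto.mono_left nhdsWithin_le_nhds).congr' ?_
  filter_upwards [self_mem_nhdsWithin] with y hy
  exact (slope_sub_smul h (Ne.symm hy)).symm

theorem hasDerivAt_log_mul_one_add_sub_mul {u k : ℝ → ℝ} {x u' : ℝ} (hu : HasDerivAt u u' x)
    (hux : u x = 1) (hk : ContinuousAt k x) :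
    HasDerivAt (fun y => log (u y * (1 + (y - x) * k y))) (u' + k x) x := by
  have hv : HasDerivAt (fun y => 1 + (y - x) * k y) (k x) x :=
    (hasDerivAt_sub_smul_of_continuousAt hk).const_add 1
  refine ((hu.mul hv).log (by simp [hux])).congr_deriv ?_
  simp [hux]

/-- The continuous extension of `x ↦ x * coth x` to `x = 0`. -/
noncomputable def xcoth (x : ℝ) : ℝ := cosh x / dslope sinh 0 x

theorem xcoth_of_ne_zero {x : ℝ} (hx : x ≠ 0) : xcoth x = x * coth x := by
  rw [xcoth, dslope_of_ne _ hx, slope_def_field, coth, sinh_zero, sub_zero, sub_zero,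
    div_div_eq_mul_div]
  ring

theorem xcoth_zero : xcoth 0 = 1 := by
  simp [xcoth, Real.deriv_sinh]

theorem continuousAt_xcoth_zero : ContinuousAt xcoth 0 :=
  continuous_cosh.continuousAt.div (continuousAt_dslope_same.2 differentiableAt_sinh)
    (by simp [Real.deriv_sinh])

section Extension

variable (α εb ξ μ : ℝ)

noncomputable def wcExt (b : ℝ) : ℝ := -εb * xcoth (α * (ξ - b) / εb)

noncomputable def wcExtDenom (b : ℝ) : ℝ := εb * μ - α * b + α * ξ + wcExt α εb ξ b

/-- `W_c` with `w_c` replaced by `wcExt` and the argument of the logarithm factored as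
`(2ξ - β₀)/β₀ · (1 + (β₀ - ξ) · 2α/D)`, `D` being its denominator. -/
noncomputable def WcExt (b : ℝ) : ℝ :=
  (b - ξ) * (4 * (εb * μ - α * ξ) + 4 * wcExt α εb ξ b) +
    α * εb * log ((2 * ξ - b) / b * (1 + (b - ξ) * (2 * α / wcExtDenom α εb ξ μ b)))

variable {α εb ξ μ}

theorem wcExt_of_ne (hα : α ≠ 0) (hεb : εb ≠ 0) {b : ℝ} (hb : b ≠ ξ) :
    wcExt α εb ξ b = α * (b - ξ) * coth (α * (ξ - b) / εb) := by
  have hs : α * (ξ - b) / εb ≠ 0 := div_ne_zero (mul_ne_zero hα (sub_ne_zero.2 hb.symm)) hεb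
  rw [wcExt, xcoth_of_ne_zero hs]
  field_simp
  ring

theorem wcExt_self : wcExt α εb ξ ξ = -εb := by
  simp [wcExt, xcoth_zero]

theorem continuousAt_wcExt : ContinuousAt (wcExt α εb ξ) ξ :=
  (continuousAt_xcoth_zero.comp_of_eq (by fun_prop) (by simp)).const_mul _

theorem wcExtDenom_self : wcExtDenom α εb ξ μ ξ = εb * (μ - 1) := by
  rw [wcExtDenom, wcExt_self]
  ring

theorem continuousAt_wcExtDenom : ContinuousAt (wcExtDenom α εb ξ μ) ξ := by
  have := continuousAt_wcExt (α := α) (εb := εb) (ξ := ξ)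
  unfold wcExtDenom
  fun_prop

theorem WcExt_self : WcExt α εb ξ μ ξ = 0 := by
  simp [WcExt, two_mul]

theorem WcExt_eq_of_wcExtDenom_ne_zero {b : ℝ} (hD : wcExtDenom α εb ξ μ b ≠ 0) :
    WcExt α εb ξ μ b = 4 * (b - ξ) * (εb * μ - α * ξ) + 4 * (b - ξ) * wcExt α εb ξ b +
      α * εb * log ((2 * ξ - b) * (b * α + εb * μ - α * ξ + wcExt α εb ξ b) /
        (b * (εb * μ - α * b + α * ξ + wcExt α εb ξ b))) := by
  rw [WcExt, mul_div_assoc', one_add_div hD, div_mul_div_comm, wcExtDenom]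
  ring_nf

theorem hasDerivAt_WcExt (hξ : ξ ≠ 0) (hD : wcExtDenom α εb ξ μ ξ ≠ 0) :
    HasDerivAt (WcExt α εb ξ μ)
      (4 * (εb * μ - α * ξ) + 4 * wcExt α εb ξ ξ + α * εb * (-2 / ξ + 2 * α / wcExtDenom α εb ξ μ ξ)) ξ := by
  have hu : HasDerivAt (fun b => (2 * ξ - b) / b) (-2 / ξ) ξ := by
    refine (((hasDerivAt_id ξ).const_sub (2 * ξ)).div (hasDerivAt_id ξ) hξ).congr_deriv ?_
    simp
    field_simp
    ring
  have hu1 : (2 * ξ - ξ) / ξ = 1 := by rw [two_mul, add_sub_cancel_right, div_self hξ]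
  have hw := continuousAt_wcExt (α := α) (εb := εb) (ξ := ξ)
  exact (hasDerivAt_sub_smul_of_continuousAt (by fun_prop)).add
    ((hasDerivAt_log_mul_one_add_sub_mul hu hu1
      (continuousAt_const.div continuousAt_wcExtDenom hD)).const_mul _)

end Extension

theorem stmt15_general (α εb ξ μ : ℝ) (hα : 0 < α) (hεb : 0 < εb) (hξ : 0 < ξ)
    (hμ1 : μ ≠ 1)
    (wc Wc : ℝ → ℝ)
    (hwc : ∀ β₀ : ℝ, wc β₀ = α * (β₀ - ξ) * coth (α * (ξ - β₀) / εb))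
    (hWc : ∀ β₀ : ℝ, β₀ ≠ ξ →
      Wc β₀ = 4 * (β₀ - ξ) * (εb * μ - α * ξ) + 4 * (β₀ - ξ) * wc β₀ +
        α * εb * Real.log (((2 * ξ - β₀) * (β₀ * α + εb * μ - α * ξ + wc β₀)) /
          (β₀ * (εb * μ - α * β₀ + α * ξ + wc β₀))))
    (hWcξ : Wc ξ = 0) :
    HasDerivAt Wc ((2 / ξ) * (εb - εb * μ + α * ξ) * (α - 2 * (μ - 1) * ξ) / (μ - 1)) ξ := by
  have hD : wcExtDenom α εb ξ μ ξ ≠ 0 := by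
    rw [wcExtDenom_self]
    exact mul_ne_zero hεb.ne' (sub_ne_zero.2 hμ1)
  have hWc_eq : Wc =ᶠ[𝓝 ξ] WcExt α εb ξ μ := by
    filter_upwards [continuousAt_wcExtDenom.eventually_ne hD] with b hDb
    rcases eq_or_ne b ξ with rfl | hbξ
    · rw [hWcξ, WcExt_self]
    · rw [hWc b hbξ, hwc, ← wcExt_of_ne hα.ne' hεb.ne' hbξ, WcExt_eq_of_wcExtDenom_ne_zero hDb]
  refine ((hasDerivAt_WcExt hξ.ne' hD).congr_of_eventuallyEq hWc_eq).congr_deriv ?_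
  rw [wcExt_self, wcExtDenom_self]
  field_simp
  ring

/-- The derivative of the continuous extension of W_c at β₀ = ξ equals
(2/ξ)(ε_b - ε_b μ + αξ)(α - 2(μ-1)ξ)/(μ-1). -/
theorem stmt15 (α εb ξ μ : ℝ) (hα : 0 < α) (hεb : 0 < εb) (hξ : 0 < ξ) (hμ : 0 < μ)
    (hμ1 : μ ≠ 1)
    (wc Wc : ℝ → ℝ)
    (hwc : ∀ β₀ : ℝ, wc β₀ = α * (β₀ - ξ) * coth (α * (ξ - β₀) / εb))
    (hWc : ∀ β₀ : ℝ, β₀ ≠ ξ →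
      Wc β₀ = 4 * (β₀ - ξ) * (εb * μ - α * ξ) + 4 * (β₀ - ξ) * wc β₀ +
        α * εb * Real.log (((2 * ξ - β₀) * (β₀ * α + εb * μ - α * ξ + wc β₀)) /
          (β₀ * (εb * μ - α * β₀ + α * ξ + wc β₀))))
    (hWcξ : Wc ξ = 0) :
    HasDerivAt Wc ((2 / ξ) * (εb - εb * μ + α * ξ) * (α - 2 * (μ - 1) * ξ) / (μ - 1)) ξ :=
  stmt15_general α εb ξ μ hα hεb hξ hμ1 wc Wc hwc hWc hWcξ
end
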